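/- Let p > 2 and let (w_m)_{m∈ℕ} be a sequence in (0,1] with w_m → 0, and let Y_3 be the corresponding space on (ℕ×ℕ)³ with norm given by the family 𝒫_3 = {(P_I, W_I) : I ⊆ {1,2,3}}. Let |||·||| be the envelope norm generated by 𝒫_3. Then sup{ |||x||| / ‖x‖_{Y_3} : x ∈ Y_3, x ≠ 0 } ≥ 3^{1/p}. -/

import Mathlib

open scoped ENNReal
open MeasureTheory Filter

noncomputable section

variable {α : Type*}

/-- `P` is a partition of the type `α`: a collection of pairwise disjoint
nonempty subsets of `α` whose union is all of `α`. -/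
def IsPartition (P : Set (Set α)) : Prop :=
  (∀ N ∈ P, N.Nonempty) ∧ P.PairwiseDisjoint id ∧ ⋃₀ P = Set.univ

/-- A weight function takes values in `(0,1]`. -/
def IsWeight (W : α → ℝ) : Prop := ∀ a, W a ∈ Set.Ioc (0 : ℝ) 1

/-- `‖x‖_{P,W} = (Σ_{N∈P} (Σ_{j∈N} x_j² w_j²)^{p/2})^{1/p}`, valued in `[0,∞]`. -/
def pwNorm (p : ℝ) (P : Set (Set α)) (W : α → ℝ) (x : α → ℝ) : ℝ≥0∞ :=
  (∑' N : P, (∑' j : N.1, ENNReal.ofReal ((x j.1) ^ 2 * (W j.1) ^ 2)) ^ (p / 2)) ^ (1 / p)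

/-- A partition–weight pair on `α`. -/
abbrev PWPair (α : Type*) := Set (Set α) × (α → ℝ)

/-- Every member of the family is a genuine partition–weight pair. -/
def IsPWFamily (𝒞 : Set (PWPair α)) : Prop :=
  ∀ PW ∈ 𝒞, IsPartition PW.1 ∧ IsWeight PW.2

/-- `‖x‖_𝒞 = sup_{(P,W) ∈ 𝒞} ‖x‖_{P,W}`. -/
def famNorm (p : ℝ) (𝒞 : Set (PWPair α)) (x : α → ℝ) : ℝ≥0∞ :=
  ⨆ PW ∈ 𝒞, pwNorm p PW.1 PW.2 x

/-- The block of the partition `Q` containing `b` (for a genuine partition this is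
the unique element of `Q` containing `b`). -/
def blockOf (Q : Set (Set α)) (b : α) : Set α := ⋃₀ {q ∈ Q | b ∈ q}

/-- The partition `P(Q,T)` obtained from a partition `Q` and a choice `T` of a
partition–weight pair for each block of `Q`. -/
def envPartition (Q : Set (Set α)) (T : Set α → PWPair α) : Set (Set α) :=
  {K | K.Nonempty ∧ ∃ q ∈ Q, ∃ s ∈ (T q).1, K = q ∩ s}

/-- The weight `W(Q,T)`: on the block `q` of `Q` it is the weight chosen by `T q`. -/
def envWeight (Q : Set (Set α)) (T : Set α → PWPair α) : α → ℝ :=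
  fun b => (T (blockOf Q b)).2 b

/-- A family of partition–weight pairs satisfies the envelope property if it is
closed under the operation `(Q, T) ↦ (P(Q,T), W(Q,T))`. -/
def EnvelopeProp (𝒞 : Set (PWPair α)) : Prop :=
  ∀ Q : Set (Set α), IsPartition Q → ∀ T : Set α → PWPair α, (∀ q ∈ Q, T q ∈ 𝒞) →
    (envPartition Q T, envWeight Q T) ∈ 𝒞

/-- The family `𝒞̃` of all pairs `(P(Q,T), W(Q,T))`. -/
def envFam (𝒞 : Set (PWPair α)) : Set (PWPair α) :=
  {PW | ∃ Q T, IsPartition Q ∧ (∀ q ∈ Q, T q ∈ 𝒞) ∧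
    PW = (envPartition Q T, envWeight Q T)}

/-- The envelope norm generated by `𝒞`. -/
def envNorm (p : ℝ) (𝒞 : Set (PWPair α)) (x : α → ℝ) : ℝ≥0∞ := famNorm p (envFam 𝒞) x

/-- The index set `(ℕ×ℕ)^n`. -/
abbrev BIdx (n : ℕ) := Fin n → ℕ × ℕ

/-- The partition `P_I` of `(ℕ×ℕ)^n` into the sets obtained by fixing the coordinates
`i_k` for `k ∈ I` and letting the others range over all of `ℕ × ℕ`. -/
def PI {n : ℕ} (I : Finset (Fin n)) : Set (Set (BIdx n)) :=
  {S | ∃ g : Fin n → ℕ × ℕ, S = {i : BIdx n | ∀ k ∈ I, i k = g k}}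

/-- The weight `W_I(i) = Π_{k∉I} w_{i_k}`, where `w_{(m,l)} = w_m`. -/
def WI (w : ℕ → ℝ) {n : ℕ} (I : Finset (Fin n)) : BIdx n → ℝ :=
  fun i => ∏ k ∈ Iᶜ, w (i k).1

/-- The family of partition–weight pairs `{(P_I, W_I) : I ⊆ {1,…,n}}` defining `Y_n`. -/
def famYn (w : ℕ → ℝ) (n : ℕ) : Set (PWPair (BIdx n)) :=
  Set.range fun I : Finset (Fin n) => (PI I, WI w I)

/-- The norm of `Y_n`:  `max_{I ⊆ {1,…,n}} ‖x‖_{P_I,W_I}`. -/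
def Ynorm (p : ℝ) (w : ℕ → ℝ) (n : ℕ) (x : BIdx n → ℝ) : ℝ≥0∞ :=
  famNorm p (famYn w n) x

/-!
Take `x = c · 1_{S₁ ∪ S₂ ∪ S₃}` with `c = 1 / (w₀² L)`, where `S_r` is the set of the `L²` indices
with `i_r = (m, 0)` and `i_k ∈ {0} × [0, L)` for `k ≠ r`. The envelope pair that uses
`(P_{r}, W_{r})` on the chamber of indices whose first coordinates are `m` at `r` and `0` elsewhere
puts each `S_r` into a single block, of mass `L² c² w₀⁴ = 1`; hence `|||x||| ≥ 3^{1/p}`.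

For `|I| ≤ 1` we use `‖x‖_{P_I,W_I} ≤ (Σ_j x_j² W_I(j)²)^{1/2}` (as `p ≥ 2`), and this mass is
`Σ_r (W_I|_{S_r} / w₀²)² ≤ 1 + 3 (w_m / w₀)²`. For `|I| ≥ 2` every block of `P_I` meets each `S_r`
in at most `L` points, so each block has mass `O(1/L)` while the total mass stays bounded; since
`p > 2` these norms are `≤ 1` once `L` is large. Letting `m → ∞` makes `‖x‖_{Y₃} → 1`.
-/

open Finset

section PartitionNorms

variable {P : Set (Set α)} {W x : α → ℝ} {p : ℝ}

theorem ENNReal.tsum_rpow_le_rpow_sub_one_mul_tsum {ι : Type*} {f : ι → ℝ≥0∞} {M : ℝ≥0∞}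
    {q : ℝ} (hq : 1 ≤ q) (hf : ∀ i, f i ≤ M) :
    ∑' i, f i ^ q ≤ M ^ (q - 1) * ∑' i, f i := by
  rw [← ENNReal.tsum_mul_left]
  refine ENNReal.tsum_le_tsum fun i => ?_
  calc f i ^ q = f i ^ (q - 1) * f i ^ (1 : ℝ) := by
        rw [← ENNReal.rpow_add_of_nonneg _ _ (by linarith) zero_le_one, sub_add_cancel]
    _ ≤ M ^ (q - 1) * f i := by
        rw [ENNReal.rpow_one]
        exact mul_le_mul_left (ENNReal.rpow_le_rpow (hf i) (by linarith)) _

theorem tsum_tsum_subtype_le_tsum (hP : P.PairwiseDisjoint id) (f : α → ℝ≥0∞) :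
    ∑' N : P, ∑' j : (N : Set α), f j ≤ ∑' j, f j := by
  calc _ = ∑' j : ⋃ N ∈ P, id N, f j := (ENNReal.tsum_biUnion' hP).symm
    _ ≤ _ := ENNReal.tsum_comp_le_tsum_of_injective Subtype.val_injective f

theorem pwNorm_le (hp : 2 ≤ p) (hP : P.PairwiseDisjoint id) {M T : ℝ≥0∞}
    (hM : ∀ N ∈ P, ∑' j : N, ENNReal.ofReal (x j ^ 2 * W j ^ 2) ≤ M)
    (hT : ∑' j, ENNReal.ofReal (x j ^ 2 * W j ^ 2) ≤ T) :
    pwNorm p P W x ≤ (M ^ (p / 2 - 1) * T) ^ (1 / p) := by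
  refine ENNReal.rpow_le_rpow ?_ (by positivity)
  calc _ ≤ M ^ (p / 2 - 1) * ∑' N : P, ∑' j : (N : Set α), ENNReal.ofReal (x j ^ 2 * W j ^ 2) :=
        ENNReal.tsum_rpow_le_rpow_sub_one_mul_tsum (by linarith) fun N => hM N N.2
    _ ≤ M ^ (p / 2 - 1) * T := by
        gcongr
        exact (tsum_tsum_subtype_le_tsum hP _).trans hT

theorem pwNorm_le_tsum_rpow_half (hp : 2 ≤ p) (hP : P.PairwiseDisjoint id) :
    pwNorm p P W x ≤ (∑' j, ENNReal.ofReal (x j ^ 2 * W j ^ 2)) ^ (1 / 2 : ℝ) := by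
  set T := ∑' j, ENNReal.ofReal (x j ^ 2 * W j ^ 2)
  have hM : ∀ N ∈ P, ∑' j : N, ENNReal.ofReal (x j ^ 2 * W j ^ 2) ≤ T := fun N _ =>
    ENNReal.tsum_comp_le_tsum_of_injective Subtype.val_injective _
  calc pwNorm p P W x ≤ (T ^ (p / 2 - 1) * T ^ (1 : ℝ)) ^ (1 / p) := by
        rw [ENNReal.rpow_one]; exact pwNorm_le hp hP hM le_rfl
    _ = T ^ (1 / 2 : ℝ) := by
        rw [← ENNReal.rpow_add_of_nonneg _ _ (by linarith) zero_le_one, ← ENNReal.rpow_mul]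
        congr 1
        field_simp
        ring

theorem card_rpow_le_pwNorm {ι : Type*} [Fintype ι] (hp : 0 < p) {K : ι → Set α}
    (hK : Function.Injective K) (hKP : ∀ i, K i ∈ P)
    (hmass : ∀ i, 1 ≤ ∑' j : K i, ENNReal.ofReal (x j ^ 2 * W j ^ 2)) :
    (Fintype.card ι : ℝ≥0∞) ^ (1 / p) ≤ pwNorm p P W x := by
  refine ENNReal.rpow_le_rpow ?_ (by positivity)
  have hKinj : Function.Injective fun i => (⟨K i, hKP i⟩ : P) :=
    fun i i' h => hK (congrArg Subtype.val h)
  calc (Fintype.card ι : ℝ≥0∞) = ∑' _ : ι, 1 := by simp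
    _ ≤ ∑' i, (∑' j : K i, ENNReal.ofReal (x j ^ 2 * W j ^ 2)) ^ (p / 2) :=
        ENNReal.tsum_le_tsum fun i => ENNReal.one_le_rpow (hmass i) (by positivity)
    _ ≤ _ := ENNReal.tsum_comp_le_tsum_of_injective hKinj
        fun N : P => (∑' j : (N : Set α), ENNReal.ofReal (x j ^ 2 * W j ^ 2)) ^ (p / 2)

end PartitionNorms

theorem blockOf_eq {Q : Set (Set α)} (hQ : IsPartition Q) {q : Set α} (hq : q ∈ Q) {b : α}
    (hb : b ∈ q) : blockOf Q b = q := by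
  have : {q' ∈ Q | b ∈ q'} = {q} := by
    ext q'
    exact ⟨fun h => hQ.2.1.elim_set h.1 hq b h.2 hb, fun h => h ▸ ⟨hq, hb⟩⟩
  rw [blockOf, this, Set.sUnion_singleton]

theorem tsum_subtype_indicator_const (N S : Set α) (c : ℝ≥0∞) :
    ∑' j : N, S.indicator (fun _ => c) j = (N ∩ S).encard * c := by
  rw [_root_.tsum_subtype N, Set.indicator_indicator, ← _root_.tsum_subtype, ENNReal.tsum_set_const]

theorem card_filter_piFinset_le {ι : Type*} [Fintype ι] [DecidableEq ι] {β : ι → Type*}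
    [∀ k, DecidableEq (β k)] (t : ∀ k, Finset (β k)) (J : Finset ι) (g : ∀ k, β k) :
    ((Fintype.piFinset t).filter fun i => ∀ k ∈ J, i k = g k).card ≤ ∏ k ∈ Jᶜ, (t k).card := by
  calc _ ≤ (Fintype.piFinset fun k => if k ∈ J then {g k} else t k).card := by
        refine card_le_card fun i hi => ?_
        rw [mem_filter, Fintype.mem_piFinset] at hi
        rw [Fintype.mem_piFinset]
        intro k
        split_ifs with hk
        · exact mem_singleton.2 (hi.2 k hk)
        · exact hi.1 k
    _ = ∏ k ∈ Jᶜ, (t k).card := by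
        have hJ : ∏ k ∈ J, (if k ∈ J then {g k} else t k).card = 1 :=
          prod_eq_one fun k hk => by rw [if_pos hk, card_singleton]
        rw [Fintype.card_piFinset, ← prod_compl_mul_prod J, hJ, mul_one]
        exact prod_congr rfl fun k hk => by rw [if_neg (mem_compl.1 hk)]

theorem PI_pairwiseDisjoint {n : ℕ} (I : Finset (Fin n)) : (PI I).PairwiseDisjoint id := by
  rintro _ ⟨g, rfl⟩ _ ⟨g', rfl⟩ hne
  refine Set.disjoint_left.2 fun i hi hi' => hne ?_
  ext j
  simp only [Set.mem_ofPred_eq] at hi hi' ⊢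
  exact forall₂_congr fun k hk => by rw [← hi k hk, hi' k hk]

theorem exists_nat_ofReal_div_rpow_mul_le_one (A : ℝ) {T : ℝ≥0∞} (hT : T ≠ ⊤) {s : ℝ}
    (hs : 0 < s) : ∃ L : ℕ, 1 ≤ L ∧ ENNReal.ofReal (A / L) ^ s * T ≤ 1 := by
  have h0 : Tendsto (fun L : ℕ => ENNReal.ofReal (A / L) ^ s * T) atTop (nhds 0) := by
    have h1 := ENNReal.tendsto_ofReal (tendsto_const_div_atTop_nhds_zero_nat A)
    rw [ENNReal.ofReal_zero] at h1
    have h2 := ((ENNReal.continuous_rpow_const (y := s)).tendsto 0).comp h1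
    rw [ENNReal.zero_rpow_of_pos hs] at h2
    simpa using ENNReal.Tendsto.mul_const h2 (Or.inr hT)
  obtain ⟨L, hL, hL1⟩ := ((h0.eventually (gt_mem_nhds zero_lt_one)).and
    (eventually_ge_atTop 1)).exists
  exact ⟨L, hL1, hL.le⟩

theorem le_iSup_div_mul {ι : Type*} [Zero ι] {f g : ι → ℝ≥0∞} {x : ι} {A B : ℝ≥0∞}
    (hx : x ≠ 0) (hB0 : B ≠ 0) (hB : B ≠ ⊤) (hgx : g x ≤ B) (hfx : A ≤ f x) :
    A ≤ (⨆ (y : ι) (_ : y ≠ 0) (_ : g y < ⊤), f y / g y) * B := by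
  rw [← ENNReal.div_le_iff hB0 hB]
  calc A / B ≤ f x / g x := ENNReal.div_le_div hfx hgx
    _ ≤ _ := le_iSup₂_of_le x hx
        (le_iSup (fun _ : g x < ⊤ => f x / g x) (hgx.trans_lt hB.lt_top))

namespace EnvelopeY3

variable {w : ℕ → ℝ} {m L : ℕ} {r : Fin 3}

def pieceFactor (m L : ℕ) (r k : Fin 3) : Finset (ℕ × ℕ) :=
  if k = r then {(m, 0)} else {0} ×ˢ range L

def piece (m L : ℕ) (r : Fin 3) : Finset (BIdx 3) := Fintype.piFinset (pieceFactor m L r)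

def testVec (c : ℝ) (m L : ℕ) : BIdx 3 → ℝ :=
  (⋃ r, (piece m L r : Set (BIdx 3))).indicator fun _ => c

def chamber (m : ℕ) (r : Fin 3) : Set (BIdx 3) := {i | ∀ k, (i k).1 = if k = r then m else 0}

def basePoint (m : ℕ) (r : Fin 3) : BIdx 3 := fun k => if k = r then (m, 0) else 0

/-- The constant value of `W_I` on `chamber m r`. -/
def pieceWeight (w : ℕ → ℝ) (m : ℕ) (I : Finset (Fin 3)) (r : Fin 3) : ℝ :=
  ∏ k ∈ Iᶜ, w (if k = r then m else 0)

theorem card_pieceFactor (k : Fin 3) :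
    (pieceFactor m L r k).card = if k = r then 1 else L := by
  unfold pieceFactor; split_ifs <;> simp

theorem card_piece : (piece m L r).card = L ^ 2 := by
  rw [piece, Fintype.card_piFinset]
  simp only [card_pieceFactor]
  fin_cases r <;> simp [Fin.prod_univ_three, sq]

theorem card_filter_piece_le (hL : 1 ≤ L) {J : Finset (Fin 3)} (hJ : 2 ≤ J.card)
    (g : BIdx 3) : ((piece m L r).filter fun i => ∀ k ∈ J, i k = g k).card ≤ L := by
  have hJc : Jᶜ.card ≤ 1 := by rw [card_compl, Fintype.card_fin]; omega
  calc _ ≤ ∏ k ∈ Jᶜ, (pieceFactor m L r k).card := by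
        unfold piece; convert card_filter_piFinset_le (pieceFactor m L r) J g
    _ ≤ L ^ Jᶜ.card := prod_le_pow_card _ _ _ fun k _ => by
        rw [card_pieceFactor]; split_ifs <;> omega
    _ ≤ L := by simpa using Nat.pow_le_pow_right hL hJc

theorem fst_of_mem_piece {i : BIdx 3} (hi : i ∈ piece m L r) (k : Fin 3) :
    (i k).1 = if k = r then m else 0 := by
  have := Fintype.mem_piFinset.1 hi k
  unfold pieceFactor at this
  split_ifs at this ⊢ with hk
  · rw [mem_singleton.1 this]
  · exact (mem_singleton.1 (mem_product.1 this).1)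

theorem piece_subset_chamber : (piece m L r : Set (BIdx 3)) ⊆ chamber m r :=
  fun _ hi => fst_of_mem_piece hi

theorem basePoint_mem_chamber : basePoint m r ∈ chamber m r := by
  intro k; unfold basePoint; split_ifs <;> rfl

theorem eq_of_mem_chamber (hm : m ≠ 0) {r' : Fin 3} {i : BIdx 3} (hi : i ∈ chamber m r)
    (hi' : i ∈ chamber m r') : r = r' := by
  by_contra hne
  have h1 := hi r
  have h2 := hi' r
  rw [if_pos rfl] at h1
  rw [if_neg hne, h1] at h2
  exact hm h2

theorem WI_of_mem_chamber (I : Finset (Fin 3)) {i : BIdx 3} (hi : i ∈ chamber m r) :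
    WI w I i = pieceWeight w m I r :=
  prod_congr rfl fun k _ => by rw [hi k]

theorem ofReal_testVec_sq_mul_le (c : ℝ) (I : Finset (Fin 3)) (j : BIdx 3) :
    ENNReal.ofReal (testVec c m L j ^ 2 * WI w I j ^ 2) ≤
      ∑ r, (piece m L r : Set (BIdx 3)).indicator
        (fun _ => ENNReal.ofReal (c ^ 2 * pieceWeight w m I r ^ 2)) j := by
  by_cases hj : j ∈ ⋃ r, (piece m L r : Set (BIdx 3))
  · obtain ⟨r, hr⟩ := Set.mem_iUnion.1 hj
    calc _ = (piece m L r : Set (BIdx 3)).indicator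
          (fun _ => ENNReal.ofReal (c ^ 2 * pieceWeight w m I r ^ 2)) j := by
          rw [Set.indicator_of_mem hr, testVec, Set.indicator_of_mem hj,
            WI_of_mem_chamber I (piece_subset_chamber hr)]
      _ ≤ _ := single_le_sum (f := fun r => (piece m L r : Set (BIdx 3)).indicator
          (fun _ => ENNReal.ofReal (c ^ 2 * pieceWeight w m I r ^ 2)) j)
          (fun r _ => zero_le) (mem_univ r)
  · simp [testVec, Set.indicator_of_notMem hj]

theorem tsum_mass_testVec_le (c : ℝ) (I : Finset (Fin 3)) (N : Set (BIdx 3)) :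
    ∑' j : N, ENNReal.ofReal (testVec c m L j ^ 2 * WI w I j ^ 2) ≤
      ∑ r, (N ∩ piece m L r).encard * ENNReal.ofReal (c ^ 2 * pieceWeight w m I r ^ 2) := by
  calc _ ≤ ∑' j : N, ∑ r, (piece m L r : Set (BIdx 3)).indicator
        (fun _ => ENNReal.ofReal (c ^ 2 * pieceWeight w m I r ^ 2)) j :=
        ENNReal.tsum_le_tsum fun j => ofReal_testVec_sq_mul_le c I j
    _ = _ := by
        rw [Summable.tsum_finsetSum fun _ _ => ENNReal.summable]
        simp only [tsum_subtype_indicator_const]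

theorem pieceWeight_of_mem {I : Finset (Fin 3)} (hr : r ∈ I) :
    pieceWeight w m I r = w 0 ^ (3 - I.card) := by
  rw [pieceWeight, prod_congr rfl fun k hk => by
      rw [if_neg (by rintro rfl; exact mem_compl.1 hk hr)],
    prod_const, card_compl, Fintype.card_fin]

theorem pieceWeight_of_not_mem {I : Finset (Fin 3)} (hr : r ∉ I) :
    pieceWeight w m I r = w m * w 0 ^ (2 - I.card) := by
  rw [pieceWeight, ← mul_prod_erase _ _ (mem_compl.2 hr), if_pos rfl,
    prod_congr rfl fun k hk => by rw [if_neg (ne_of_mem_erase hk)], prod_const,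
    card_erase_of_mem (mem_compl.2 hr), card_compl, Fintype.card_fin]
  congr 2
  omega

theorem pieceWeight_nonneg (hw : IsWeight w) (I : Finset (Fin 3)) (r : Fin 3) :
    0 ≤ pieceWeight w m I r :=
  prod_nonneg fun _ _ => (hw _).1.le

theorem pieceWeight_le_one (hw : IsWeight w) (I : Finset (Fin 3)) (r : Fin 3) :
    pieceWeight w m I r ≤ 1 :=
  prod_le_one (fun _ _ => (hw _).1.le) fun _ _ => (hw _).2

theorem sq_pieceWeight_div_le (hw : IsWeight w) {I : Finset (Fin 3)} (hI : I.card ≤ 1)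
    (r : Fin 3) :
    (pieceWeight w m I r / w 0 ^ 2) ^ 2 ≤ (if r ∈ I then 1 else 0) + (w m / w 0) ^ 2 := by
  have hβ : 0 < w 0 := (hw 0).1
  split_ifs with hr
  · have hI1 : I.card = 1 := le_antisymm hI (card_pos.2 ⟨r, hr⟩)
    rw [pieceWeight_of_mem hr, hI1, div_self (by positivity)]
    linarith [sq_nonneg (w m / w 0)]
  · have hle : pieceWeight w m I r / w 0 ^ 2 ≤ w m / w 0 := by
      rw [pieceWeight_of_not_mem hr, div_le_div_iff₀ (by positivity) hβ, sq, ← mul_assoc]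
      exact mul_le_mul_of_nonneg_right (mul_le_mul_of_nonneg_left
        (pow_le_of_le_one hβ.le (hw 0).2 (by omega)) (hw m).1.le) hβ.le
    rw [zero_add]
    exact pow_le_pow_left₀ (div_nonneg (pieceWeight_nonneg hw I r) (by positivity)) hle 2

theorem sum_sq_pieceWeight_div_le (hw : IsWeight w) {I : Finset (Fin 3)} (hI : I.card ≤ 1) :
    ∑ r, (pieceWeight w m I r / w 0 ^ 2) ^ 2 ≤ 1 + 3 * (w m / w 0) ^ 2 := by
  calc _ ≤ ∑ r, ((if r ∈ I then 1 else 0) + (w m / w 0) ^ 2) :=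
        sum_le_sum fun r _ => sq_pieceWeight_div_le hw hI r
    _ = I.card + 3 * (w m / w 0) ^ 2 := by simp [sum_add_distrib, sum_ite_mem]
    _ ≤ 1 + 3 * (w m / w 0) ^ 2 := by gcongr; exact_mod_cast hI

theorem natCast_sq_mul_ofReal {b : ℝ} (hb : b ≠ 0) (hL : L ≠ 0) (y : ℝ) :
    ((L ^ 2 : ℕ) : ℝ≥0∞) * ENNReal.ofReal (((b * L)⁻¹) ^ 2 * y ^ 2) =
      ENNReal.ofReal ((y / b) ^ 2) := by
  rw [← ENNReal.ofReal_natCast, ← ENNReal.ofReal_mul (by positivity)]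
  congr 1
  push_cast
  field_simp

theorem tsum_mass_testVec_le_ofReal (hw : IsWeight w) (hL : L ≠ 0) (I : Finset (Fin 3)) :
    ∑' j, ENNReal.ofReal (testVec (w 0 ^ 2 * L)⁻¹ m L j ^ 2 * WI w I j ^ 2) ≤
      ENNReal.ofReal (∑ r, (pieceWeight w m I r / w 0 ^ 2) ^ 2) := by
  rw [← tsum_univ, ENNReal.ofReal_sum_of_nonneg fun _ _ => sq_nonneg _]
  refine (tsum_mass_testVec_le _ I _).trans (le_of_eq (sum_congr rfl fun r _ => ?_))
  rw [Set.univ_inter, Set.encard_coe_eq_coe_finsetCard, card_piece, ENat.toENNReal_coe,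
    natCast_sq_mul_ofReal (pow_ne_zero 2 (hw 0).1.ne') hL]

theorem tsum_mass_testVec_le_of_two_le_card (hw : IsWeight w) (hL : 1 ≤ L)
    {I : Finset (Fin 3)} (hI : 2 ≤ I.card) {N : Set (BIdx 3)} (hN : N ∈ PI I) :
    ∑' j : N, ENNReal.ofReal (testVec (w 0 ^ 2 * L)⁻¹ m L j ^ 2 * WI w I j ^ 2) ≤
      ENNReal.ofReal (3 / w 0 ^ 4 / L) := by
  obtain ⟨g, rfl⟩ := hN
  set c : ℝ := (w 0 ^ 2 * L)⁻¹ with hc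
  have hcount : ∀ r, ({i : BIdx 3 | ∀ k ∈ I, i k = g k} ∩ piece m L r).encard ≤ L := by
    intro r
    have : {i : BIdx 3 | ∀ k ∈ I, i k = g k} ∩ piece m L r =
        ↑((piece m L r).filter fun i => ∀ k ∈ I, i k = g k) := by
      ext i; simp [and_comm]
    rw [this, Set.encard_coe_eq_coe_finsetCard]
    exact_mod_cast card_filter_piece_le hL hI g
  have hweight : ∀ r, ENNReal.ofReal (c ^ 2 * pieceWeight w m I r ^ 2) ≤ ENNReal.ofReal (c ^ 2) :=
    fun r => ENNReal.ofReal_le_ofReal (mul_le_of_le_one_right (sq_nonneg c)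
      (pow_le_one₀ (pieceWeight_nonneg hw I r) (pieceWeight_le_one hw I r)))
  calc _ ≤ ∑ r : Fin 3, (L : ℝ≥0∞) * ENNReal.ofReal (c ^ 2) :=
        (tsum_mass_testVec_le c I _).trans (sum_le_sum fun r _ =>
          mul_le_mul' (by exact_mod_cast hcount r) (hweight r))
    _ = ENNReal.ofReal (3 * (L * c ^ 2)) := by
        rw [sum_const, card_univ, Fintype.card_fin, nsmul_eq_mul, ENNReal.ofReal_mul (by norm_num),
          ENNReal.ofReal_mul (by positivity), ENNReal.ofReal_natCast]
        norm_num
    _ = ENNReal.ofReal (3 / w 0 ^ 4 / L) := by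
        have hβ : w 0 ≠ 0 := (hw 0).1.ne'
        have hL0 : (L : ℝ) ≠ 0 := by positivity
        rw [hc]
        congr 1
        field_simp

theorem pwNorm_testVec_le_of_card_le_one (hw : IsWeight w) {p : ℝ} (hp : 2 ≤ p) (hL : L ≠ 0)
    {I : Finset (Fin 3)} (hI : I.card ≤ 1) :
    pwNorm p (PI I) (WI w I) (testVec (w 0 ^ 2 * L)⁻¹ m L) ≤
      ENNReal.ofReal (1 + 3 * (w m / w 0) ^ 2) := by
  set B := ENNReal.ofReal (1 + 3 * (w m / w 0) ^ 2)
  have hB : 1 ≤ B := ENNReal.one_le_ofReal.2 (by linarith [sq_nonneg (w m / w 0)])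
  calc _ ≤ _ := pwNorm_le_tsum_rpow_half hp (PI_pairwiseDisjoint I)
    _ ≤ B ^ (1 / 2 : ℝ) := ENNReal.rpow_le_rpow ((tsum_mass_testVec_le_ofReal hw hL I).trans
        (ENNReal.ofReal_le_ofReal (sum_sq_pieceWeight_div_le hw hI))) (by norm_num)
    _ ≤ B := by simpa using ENNReal.rpow_le_rpow_of_exponent_le hB (by norm_num : (1 / 2 : ℝ) ≤ 1)

theorem pwNorm_testVec_le_one_of_two_le_card (hw : IsWeight w) {p : ℝ} (hp : 2 ≤ p)
    (hL : 1 ≤ L) (hLbig : ENNReal.ofReal (3 / w 0 ^ 4 / L) ^ (p / 2 - 1) *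
      ENNReal.ofReal (3 / w 0 ^ 4) ≤ 1) {I : Finset (Fin 3)} (hI : 2 ≤ I.card) :
    pwNorm p (PI I) (WI w I) (testVec (w 0 ^ 2 * L)⁻¹ m L) ≤ 1 := by
  have hT : ∑ r, (pieceWeight w m I r / w 0 ^ 2) ^ 2 ≤ 3 / w 0 ^ 4 := by
    have hβ : 0 < w 0 := (hw 0).1
    calc _ ≤ ∑ _r : Fin 3, (1 / w 0 ^ 2) ^ 2 := sum_le_sum fun r _ => by
          gcongr
          · exact div_nonneg (pieceWeight_nonneg hw I r) (by positivity)
          · exact pieceWeight_le_one hw I r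
      _ = 3 / w 0 ^ 4 := by rw [sum_const, card_univ, Fintype.card_fin]; ring
  refine (pwNorm_le hp (PI_pairwiseDisjoint I)
    (fun N hN => tsum_mass_testVec_le_of_two_le_card hw hL hI hN)
    ((tsum_mass_testVec_le_ofReal hw (by omega) I).trans (ENNReal.ofReal_le_ofReal hT))).trans ?_
  exact ENNReal.rpow_le_one hLbig (by positivity)

theorem Ynorm_testVec_le (hw : IsWeight w) {p : ℝ} (hp : 2 ≤ p) (hL : 1 ≤ L)
    (hLbig : ENNReal.ofReal (3 / w 0 ^ 4 / L) ^ (p / 2 - 1) *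
      ENNReal.ofReal (3 / w 0 ^ 4) ≤ 1) :
    Ynorm p w 3 (testVec (w 0 ^ 2 * L)⁻¹ m L) ≤ ENNReal.ofReal (1 + 3 * (w m / w 0) ^ 2) := by
  refine iSup₂_le ?_
  rintro _ ⟨I, rfl⟩
  rcases le_or_gt I.card 1 with hI | hI
  · exact pwNorm_testVec_le_of_card_le_one hw hp (by omega) hI
  · exact (pwNorm_testVec_le_one_of_two_le_card hw hp hL hLbig hI).trans
      (ENNReal.one_le_ofReal.2 (by linarith [sq_nonneg (w m / w 0)]))

def coarse (m : ℕ) : Set (Set (BIdx 3)) := insert (⋃ r, chamber m r)ᶜ (Set.range (chamber m))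

open scoped Classical in
def chamberIdx (m : ℕ) (s : Set (BIdx 3)) : Finset (Fin 3) := univ.filter fun r => s = chamber m r

/-- The map `T` of the envelope construction: `(P_{r}, W_{r})` on `chamber m r`,
`(P_∅, W_∅)` elsewhere. -/
def envChoice (w : ℕ → ℝ) (m : ℕ) (s : Set (BIdx 3)) : PWPair (BIdx 3) :=
  (PI (chamberIdx m s), WI w (chamberIdx m s))

def cell (m : ℕ) (r : Fin 3) : Set (BIdx 3) := chamber m r ∩ {i | i r = (m, 0)}

theorem coarse_isPartition (hm : m ≠ 0) : IsPartition (coarse m) := by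
  refine ⟨?_, ?_, ?_⟩
  · rintro _ (rfl | ⟨r, rfl⟩)
    · refine ⟨fun _ => (m + 1, 0), fun h => ?_⟩
      obtain ⟨r, hr⟩ := Set.mem_iUnion.1 h
      simpa using hr r
    · exact ⟨basePoint m r, basePoint_mem_chamber⟩
  · rintro _ (rfl | ⟨r, rfl⟩) _ (rfl | ⟨r', rfl⟩) hne
    · exact absurd rfl hne
    · exact Set.disjoint_left.2 fun i hi hi' => hi (Set.mem_iUnion.2 ⟨r', hi'⟩)
    · exact Set.disjoint_left.2 fun i hi hi' => hi' (Set.mem_iUnion.2 ⟨r, hi⟩)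
    · exact Set.disjoint_left.2 fun i hi hi' => hne (congrArg _ (eq_of_mem_chamber hm hi hi'))
  · refine Set.eq_univ_of_forall fun i => ?_
    by_cases h : i ∈ ⋃ r, chamber m r
    · obtain ⟨r, hr⟩ := Set.mem_iUnion.1 h
      exact ⟨chamber m r, Set.mem_insert_of_mem _ ⟨r, rfl⟩, hr⟩
    · exact ⟨_, Set.mem_insert _ _, h⟩

theorem chamber_mem_coarse (m : ℕ) (r : Fin 3) : chamber m r ∈ coarse m :=
  Set.mem_insert_of_mem _ ⟨r, rfl⟩

theorem chamberIdx_chamber (hm : m ≠ 0) : chamberIdx m (chamber m r) = {r} := by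
  ext r'
  simp only [chamberIdx, mem_filter, mem_univ, true_and, mem_singleton]
  exact ⟨fun h => (eq_of_mem_chamber hm basePoint_mem_chamber (h ▸ basePoint_mem_chamber)).symm,
    fun h => h ▸ rfl⟩

theorem envPair_mem_envFam (hm : m ≠ 0) :
    (envPartition (coarse m) (envChoice w m), envWeight (coarse m) (envChoice w m)) ∈
      envFam (famYn w 3) :=
  ⟨coarse m, envChoice w m, coarse_isPartition hm, fun _ _ => ⟨_, rfl⟩, rfl⟩

theorem basePoint_mem_cell : basePoint m r ∈ cell m r :=
  ⟨basePoint_mem_chamber, by simp [basePoint]⟩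

theorem cell_injective (hm : m ≠ 0) : Function.Injective (cell m) := fun r r' h =>
  eq_of_mem_chamber hm basePoint_mem_chamber (h ▸ basePoint_mem_cell : basePoint m r ∈ cell m r').1

theorem cell_mem_envPartition (hm : m ≠ 0) (r : Fin 3) :
    cell m r ∈ envPartition (coarse m) (envChoice w m) := by
  refine ⟨⟨_, basePoint_mem_cell⟩, chamber m r, chamber_mem_coarse m r, {i | i r = (m, 0)}, ?_, rfl⟩
  rw [envChoice, chamberIdx_chamber hm]
  exact ⟨fun _ => (m, 0), by ext; simp⟩

theorem piece_subset_cell : (piece m L r : Set (BIdx 3)) ⊆ cell m r := fun i hi =>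
  ⟨piece_subset_chamber hi, by simpa [pieceFactor] using Fintype.mem_piFinset.1 hi r⟩

theorem envWeight_of_mem_piece (hm : m ≠ 0) {i : BIdx 3} (hi : i ∈ piece m L r) :
    envWeight (coarse m) (envChoice w m) i = w 0 ^ 2 := by
  rw [envWeight, blockOf_eq (coarse_isPartition hm) (chamber_mem_coarse m r)
    (piece_subset_chamber hi), envChoice, chamberIdx_chamber hm]
  dsimp only
  rw [WI_of_mem_chamber _ (piece_subset_chamber hi), pieceWeight_of_mem (mem_singleton_self r),
    card_singleton]

theorem one_le_tsum_mass_cell (hw : IsWeight w) (hm : m ≠ 0) (hL : L ≠ 0) (r : Fin 3) :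
    1 ≤ ∑' j : cell m r, ENNReal.ofReal (testVec (w 0 ^ 2 * L)⁻¹ m L j ^ 2 *
      envWeight (coarse m) (envChoice w m) j ^ 2) := by
  set c : ℝ := (w 0 ^ 2 * L)⁻¹
  calc (1 : ℝ≥0∞) = ((L ^ 2 : ℕ) : ℝ≥0∞) * ENNReal.ofReal (c ^ 2 * (w 0 ^ 2) ^ 2) := by
        rw [natCast_sq_mul_ofReal (pow_ne_zero 2 (hw 0).1.ne') hL,
          div_self (pow_ne_zero 2 (hw 0).1.ne'), one_pow, ENNReal.ofReal_one]
    _ = ∑' j : (piece m L r : Set (BIdx 3)), ENNReal.ofReal (c ^ 2 * (w 0 ^ 2) ^ 2) := by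
        rw [ENNReal.tsum_set_const, Set.encard_coe_eq_coe_finsetCard, card_piece,
          ENat.toENNReal_coe]
    _ = ∑' j : (piece m L r : Set (BIdx 3)), ENNReal.ofReal (testVec c m L j ^ 2 *
          envWeight (coarse m) (envChoice w m) j ^ 2) := tsum_congr fun j => by
        rw [testVec, Set.indicator_of_mem (Set.mem_iUnion.2 ⟨r, j.2⟩),
          envWeight_of_mem_piece hm j.2]
    _ ≤ _ := ENNReal.tsum_mono_subtype (fun j => ENNReal.ofReal (testVec c m L j ^ 2 *
          envWeight (coarse m) (envChoice w m) j ^ 2)) piece_subset_cell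

theorem envNorm_testVec_ge (hw : IsWeight w) (hm : m ≠ 0) (hL : L ≠ 0) {p : ℝ} (hp : 0 < p) :
    (3 : ℝ≥0∞) ^ (1 / p) ≤ envNorm p (famYn w 3) (testVec (w 0 ^ 2 * L)⁻¹ m L) :=
  calc (3 : ℝ≥0∞) ^ (1 / p) = (Fintype.card (Fin 3) : ℝ≥0∞) ^ (1 / p) := by simp
    _ ≤ _ := card_rpow_le_pwNorm hp (cell_injective hm) (cell_mem_envPartition hm)
        (one_le_tsum_mass_cell hw hm hL)
    _ ≤ _ := le_iSup₂_of_le _ (envPair_mem_envFam hm) le_rfl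

theorem testVec_ne_zero {c : ℝ} (hc : c ≠ 0) (hL : L ≠ 0) : testVec c m L ≠ 0 := by
  obtain ⟨i, hi⟩ := card_pos.1 (by rw [card_piece]; positivity : 0 < (piece m L 0).card)
  intro h
  have := congrFun h i
  rw [testVec, Set.indicator_of_mem (Set.mem_iUnion.2 ⟨0, hi⟩)] at this
  exact hc this

end EnvelopeY3

open EnvelopeY3

/-- For the space `Y_3` on `(ℕ×ℕ)³`, the ratio of the envelope norm
generated by `{(P_I, W_I) : I ⊆ {1,2,3}}` to the `Y_3`-norm has supremum at least
`3^{1/p}` over nonzero elements of `Y_3`. -/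
theorem statement16 (p : ℝ) (hp : 2 < p) (w : ℕ → ℝ) (hw : IsWeight w)
    (hw0 : Filter.Tendsto w Filter.atTop (nhds 0)) :
    (3 : ℝ≥0∞) ^ ((1 : ℝ) / p) ≤
      ⨆ (x : BIdx 3 → ℝ) (_ : x ≠ 0) (_ : Ynorm p w 3 x < ⊤),
        envNorm p (famYn w 3) x / Ynorm p w 3 x := by
  set S := ⨆ (x : BIdx 3 → ℝ) (_ : x ≠ 0) (_ : Ynorm p w 3 x < ⊤),
    envNorm p (famYn w 3) x / Ynorm p w 3 x
  have hβ : 0 < w 0 := (hw 0).1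
  obtain ⟨L, hL, hLbig⟩ := exists_nat_ofReal_div_rpow_mul_le_one (3 / w 0 ^ 4)
    ENNReal.ofReal_ne_top (show 0 < p / 2 - 1 by linarith)
  have hbound : ∀ m ≠ 0, (3 : ℝ≥0∞) ^ ((1 : ℝ) / p) ≤
      S * ENNReal.ofReal (1 + 3 * (w m / w 0) ^ 2) := fun m hm =>
    le_iSup_div_mul (testVec_ne_zero (by positivity) (by omega))
      (ENNReal.ofReal_pos.2 (by positivity)).ne' ENNReal.ofReal_ne_top
      (Ynorm_testVec_le hw hp.le hL hLbig) (envNorm_testVec_ge hw hm (by omega) (by linarith))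
  have hlim : Tendsto (fun m => S * ENNReal.ofReal (1 + 3 * (w m / w 0) ^ 2)) atTop (nhds S) := by
    have h := (((hw0.div_const (w 0)).pow 2).const_mul 3).const_add 1
    simpa using ENNReal.Tendsto.const_mul (ENNReal.tendsto_ofReal h) (Or.inl (by simp))
  exact ge_of_tendsto hlim ((eventually_ne_atTop 0).mono hbound)
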